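/- arXiv:2603.03003 — 3 statements merged into one kernel-verified Lean document; each statement's English description precedes it below -/
import Mathlib

section
/- For the MSTB model with 0 < σ < 1, the configuration φ_{K2}(x) = (q tanh(σ(x − x₀)), λ √(1 − σ²) sech(σ(x − x₀))) with q, λ ∈ {±1} is a static solution of the coupled field equations −φ'' = 2φ(1 − φ² − ψ²), −ψ'' = 2ψ(1 − φ² − ψ² − σ²/2), and its total energy equals 2σ(1 − σ²/3). -/
/-! With `T = tanh (σ (x - x₀))` and `S = sech (σ (x - x₀))` one has `T' = σ S²`, `S' = -σ T S` and
`T² + S² = 1`. Given `q² = 1` and `(λ √(1 - σ²))² = 1 - σ²`, both field equations become polynomial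
identities modulo `T² + S² = 1`, and the energy density becomes `σ²(1 - σ²) S² + σ⁴ S⁴`, the
derivative of `σ(1 - σ²) T + σ³ (T - T³/3)`. Since `T` runs from `-1` to `1`, the energy is
`2σ(1 - σ²) + 4σ³/3`. -/

open MeasureTheory Filter Topology

theorem integral_of_hasDerivAt_of_nonneg {f f' : ℝ → ℝ} {m n : ℝ}
    (hderiv : ∀ x, HasDerivAt f (f' x) x) (hf' : ∀ x, 0 ≤ f' x)
    (hbot : Tendsto f atBot (𝓝 m)) (htop : Tendsto f atTop (𝓝 n)) :
    ∫ x, f' x = n - m := by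
  have hint (a b : ℝ) : IntervalIntegrable f' volume a b :=
    intervalIntegral.intervalIntegrable_deriv_of_nonneg
      (fun x _ => (hderiv x).continuousAt.continuousWithinAt) (fun x _ => hderiv x)
      fun x _ => hf' x
  have hnorm : (fun i : ℝ => ∫ x in -i..id i, ‖f' x‖) = fun i => f i - f (-i) := by
    funext i
    simp_rw [Real.norm_of_nonneg (hf' _)]
    exact intervalIntegral.integral_eq_sub_of_hasDerivAt (fun x _ => hderiv x) (hint _ _)
  refine integral_of_hasDerivAt_of_tendsto hderiv ?_ hbot htop
  refine integrable_of_intervalIntegral_norm_tendsto (n - m) (fun i => (hint _ _).1)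
    tendsto_neg_atTop_atBot tendsto_id ?_
  rw [hnorm]
  exact htop.sub (hbot.comp tendsto_neg_atTop_atBot)

namespace Real

theorem tanh_eq_one_sub_two_div (x : ℝ) : tanh x = 1 - 2 / (exp (2 * x) + 1) := by
  have h2x : exp (2 * x) = exp x * exp x := by rw [two_mul, exp_add]
  rw [tanh_eq, exp_neg, h2x]
  field_simp
  ring

theorem tendsto_tanh_atTop : Tendsto tanh atTop (𝓝 1) := by
  have hexp : Tendsto (fun x : ℝ => exp (2 * x) + 1) atTop atTop :=
    tendsto_atTop_add_const_right _ _
      (tendsto_exp_atTop.comp (tendsto_id.const_mul_atTop two_pos))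
  simpa [← tanh_eq_one_sub_two_div] using
    (tendsto_const_nhds (x := (1 : ℝ))).sub (hexp.const_div_atTop 2)

theorem tendsto_tanh_atBot : Tendsto tanh atBot (𝓝 (-1)) := by
  simpa [Function.comp_def] using
    tendsto_tanh_atTop.neg.comp tendsto_neg_atBot_atTop

theorem tanh_sq_add_one_div_cosh_sq (x : ℝ) : tanh x ^ 2 + (1 / cosh x) ^ 2 = 1 := by
  have := cosh_sq_sub_sinh_sq x
  rw [tanh_eq_sinh_div_cosh]
  field_simp
  linarith

theorem hasDerivAt_tanh (x : ℝ) : HasDerivAt tanh ((1 / cosh x) ^ 2) x := by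
  have h := (hasDerivAt_sinh x).div (hasDerivAt_cosh x) (cosh_pos x).ne'
  rw [show sinh / cosh = tanh from funext fun y => (tanh_eq_sinh_div_cosh y).symm] at h
  refine h.congr_deriv ?_
  rw [one_div_pow, ← cosh_sq_sub_sinh_sq x]
  ring

theorem hasDerivAt_one_div_cosh (x : ℝ) :
    HasDerivAt (fun y => 1 / cosh y) (-(tanh x * (1 / cosh x))) x := by
  simp only [one_div]
  refine ((hasDerivAt_cosh x).inv (cosh_pos x).ne').congr_deriv ?_
  rw [tanh_eq_sinh_div_cosh]
  ring

end Real

structure IsTanhSechPair (a : ℝ) (T S : ℝ → ℝ) : Prop where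
  hasDerivAt_fst : ∀ x, HasDerivAt T (a * S x ^ 2) x
  hasDerivAt_snd : ∀ x, HasDerivAt S (-(a * T x * S x)) x
  sq_add_sq : ∀ x, T x ^ 2 + S x ^ 2 = 1

theorem isTanhSechPair_tanh_one_div_cosh (a c : ℝ) :
    IsTanhSechPair a (fun x => Real.tanh (a * (x - c)))
      (fun x => 1 / Real.cosh (a * (x - c))) := by
  have hu (x : ℝ) : HasDerivAt (fun x => a * (x - c)) a x := by
    simpa using ((hasDerivAt_id x).sub_const c).const_mul a
  refine ⟨fun x => ?_, fun x => ?_, fun x => Real.tanh_sq_add_one_div_cosh_sq _⟩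
  · exact ((Real.hasDerivAt_tanh _).comp x (hu x)).congr_deriv (mul_comm _ _)
  · refine ((Real.hasDerivAt_one_div_cosh _).comp x (hu x)).congr_deriv ?_
    ring

theorem tendsto_tanh_mul_sub_atTop {a : ℝ} (ha : 0 < a) (c : ℝ) :
    Tendsto (fun x => Real.tanh (a * (x - c))) atTop (𝓝 1) :=
  Real.tendsto_tanh_atTop.comp ((tendsto_atTop_add_const_right _ _ tendsto_id).const_mul_atTop ha)

theorem tendsto_tanh_mul_sub_atBot {a : ℝ} (ha : 0 < a) (c : ℝ) :
    Tendsto (fun x => Real.tanh (a * (x - c))) atBot (𝓝 (-1)) :=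
  Real.tendsto_tanh_atBot.comp ((tendsto_atBot_add_const_right _ _ tendsto_id).const_mul_atBot ha)

noncomputable def mstbEnergyDensity (σ : ℝ) (φ ψ : ℝ → ℝ) (x : ℝ) : ℝ :=
  (1 / 2) * ((deriv φ x) ^ 2 + (deriv ψ x) ^ 2)
    + ((1 / 2) * ((φ x) ^ 2 + (ψ x) ^ 2 - 1) ^ 2 + (σ ^ 2 / 2) * (ψ x) ^ 2)

namespace IsTanhSechPair

variable {a : ℝ} {T S : ℝ → ℝ} (h : IsTanhSechPair a T S)
include h

theorem deriv_const_mul_fst (q : ℝ) : deriv (fun x => q * T x) = fun x => q * (a * S x ^ 2) := by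
  rw [deriv_const_mul_field']
  exact funext fun x => congrArg _ (h.hasDerivAt_fst x).deriv

theorem deriv_const_mul_snd (w : ℝ) :
    deriv (fun x => w * S x) = fun x => w * -(a * T x * S x) := by
  rw [deriv_const_mul_field']
  exact funext fun x => congrArg _ (h.hasDerivAt_snd x).deriv

theorem deriv_deriv_const_mul_fst (q x : ℝ) :
    deriv (deriv fun x => q * T x) x = -(2 * q * a ^ 2 * T x * S x ^ 2) := by
  rw [h.deriv_const_mul_fst]
  refine (((h.hasDerivAt_snd x).pow 2).const_mul a |>.const_mul q).deriv.trans ?_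
  push_cast
  ring

theorem deriv_deriv_const_mul_snd (w x : ℝ) :
    deriv (deriv fun x => w * S x) x = w * a ^ 2 * S x * (T x ^ 2 - S x ^ 2) := by
  rw [h.deriv_const_mul_snd]
  refine (((h.hasDerivAt_fst x).const_mul a).mul (h.hasDerivAt_snd x)).fun_neg.const_mul w
    |>.deriv.trans ?_
  ring

variable {q w : ℝ} (hq : q ^ 2 = 1) (hw : w ^ 2 = 1 - a ^ 2)
include hq hw

theorem field_eq_fst (x : ℝ) :
    -(deriv (deriv fun x => q * T x) x) = 2 * (q * T x) * (1 - (q * T x) ^ 2 - (w * S x) ^ 2) := by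
  rw [h.deriv_deriv_const_mul_fst, mul_pow, mul_pow, hq, hw]
  linear_combination (2 * q * T x) * h.sq_add_sq x

theorem field_eq_snd (x : ℝ) :
    -(deriv (deriv fun x => w * S x) x)
      = 2 * (w * S x) * (1 - (q * T x) ^ 2 - (w * S x) ^ 2 - a ^ 2 / 2) := by
  rw [h.deriv_deriv_const_mul_snd, mul_pow, mul_pow, hq, hw]
  linear_combination (2 - a ^ 2) * w * S x * h.sq_add_sq x

theorem mstbEnergyDensity_eq (x : ℝ) :
    mstbEnergyDensity a (fun x => q * T x) (fun x => w * S x) x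
      = a ^ 2 * (1 - a ^ 2) * S x ^ 2 + a ^ 4 * S x ^ 4 := by
  simp only [mstbEnergyDensity, h.deriv_const_mul_fst, h.deriv_const_mul_snd, mul_pow, hq, hw]
  linear_combination ((1 - a ^ 2) * a ^ 2 * S x ^ 2 / 2 + (T x ^ 2 + S x ^ 2 - 1) / 2
    - a ^ 2 * S x ^ 2) * h.sq_add_sq x

theorem integral_mstbEnergyDensity (hbot : Tendsto T atBot (𝓝 (-1)))
    (htop : Tendsto T atTop (𝓝 1)) :
    ∫ x, mstbEnergyDensity a (fun x => q * T x) (fun x => w * S x) x = 2 * a * (1 - a ^ 2 / 3) := by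
  have hprim (x : ℝ) : HasDerivAt (fun x => a * (1 - a ^ 2) * T x + a ^ 3 * (T x - T x ^ 3 / 3))
      (mstbEnergyDensity a (fun x => q * T x) (fun x => w * S x) x) x := by
    have hT := h.hasDerivAt_fst x
    rw [h.mstbEnergyDensity_eq hq hw]
    refine ((hT.const_mul _).add ((hT.sub ((hT.pow 3).div_const 3)).const_mul _)).congr_deriv ?_
    push_cast
    linear_combination (-a ^ 4 * S x ^ 2) * h.sq_add_sq x
  have hlim {f : Filter ℝ} {l : ℝ} (hl : Tendsto T f (𝓝 l)) :
      Tendsto (fun x => a * (1 - a ^ 2) * T x + a ^ 3 * (T x - T x ^ 3 / 3)) f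
        (𝓝 (a * (1 - a ^ 2) * l + a ^ 3 * (l - l ^ 3 / 3))) :=
    (hl.const_mul _).add ((hl.sub ((hl.pow 3).div_const 3)).const_mul _)
  rw [integral_of_hasDerivAt_of_nonneg hprim (fun x => by unfold mstbEnergyDensity; positivity)
    (hlim hbot) (hlim htop)]
  ring

end IsTanhSechPair

/-- For the MSTB model with `0 < σ < 1`, the kink
`φ_{K2}(x) = (q tanh(σ(x - x₀)), λ √(1-σ²) sech(σ(x - x₀)))` with `q, λ = ±1`
is a static solution of the coupled field equations
`-φ'' = 2φ(1 - φ² - ψ²)`, `-ψ'' = 2ψ(1 - φ² - ψ² - σ²/2)`, and its total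
energy equals `2σ(1 - σ²/3)`. -/
theorem mstb_kink2 (σ x₀ q l : ℝ) (hσ0 : 0 < σ) (hσ1 : σ < 1)
    (hq : q = 1 ∨ q = -1) (hl : l = 1 ∨ l = -1) :
    let φ : ℝ → ℝ := fun x => q * Real.tanh (σ * (x - x₀))
    let ψ : ℝ → ℝ := fun x => l * Real.sqrt (1 - σ ^ 2) * (1 / Real.cosh (σ * (x - x₀)))
    (∀ x, -(deriv (deriv φ) x) = 2 * φ x * (1 - (φ x) ^ 2 - (ψ x) ^ 2)) ∧
    (∀ x, -(deriv (deriv ψ) x) = 2 * ψ x * (1 - (φ x) ^ 2 - (ψ x) ^ 2 - σ ^ 2 / 2)) ∧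
    (∫ x : ℝ, ((1 / 2) * ((deriv φ x) ^ 2 + (deriv ψ x) ^ 2)
        + ((1 / 2) * ((φ x) ^ 2 + (ψ x) ^ 2 - 1) ^ 2 + (σ ^ 2 / 2) * (ψ x) ^ 2))
      = 2 * σ * (1 - σ ^ 2 / 3)) := by
  intro φ ψ
  have hpair := isTanhSechPair_tanh_one_div_cosh σ x₀
  have hq2 : q ^ 2 = 1 := by rcases hq with rfl | rfl <;> norm_num
  have hw2 : (l * Real.sqrt (1 - σ ^ 2)) ^ 2 = 1 - σ ^ 2 := by
    rw [mul_pow, Real.sq_sqrt (by nlinarith)]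
    rcases hl with rfl | rfl <;> norm_num
  exact ⟨hpair.field_eq_fst hq2 hw2, hpair.field_eq_snd hq2 hw2,
    hpair.integral_mstbEnergyDensity hq2 hw2 (tendsto_tanh_mul_sub_atBot hσ0 x₀)
      (tendsto_tanh_mul_sub_atTop hσ0 x₀)⟩
end

section
/- For the MSTB kink (tanh x, 0), the orthogonal fluctuation operator H₂₂ = −d²/dx² + σ² − 2 sech²x has the discrete eigenfunction sech(x) with eigenvalue ω² = σ² − 1. Consequently the kink (tanh x, 0) is linearly unstable (negative eigenvalue) when 0 < σ < 1 and has a positive orthogonal shape-mode eigenvalue when σ > 1. -/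
/-! Since `sech'' = sech - 2 sech³`, the cubic term cancels the potential `-2 sech²` against `sech`,
leaving `H₂₂ sech = (σ² - 1) sech`; the sign of `σ² - 1` is that of `σ - 1` for `σ > 0`. -/

open Real

lemma hasDerivAt_inv_cosh (x : ℝ) :
    HasDerivAt (fun x => 1 / cosh x) (-sinh x / cosh x ^ 2) x :=
  ((hasDerivAt_const x (1 : ℝ)).fun_div (hasDerivAt_cosh x) (cosh_pos x).ne').congr_deriv
    (by ring)

lemma hasDerivAt_neg_sinh_div_cosh_sq (x : ℝ) :
    HasDerivAt (fun x => -sinh x / cosh x ^ 2) (1 / cosh x - 2 / cosh x ^ 3) x := by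
  have hc : cosh x ≠ 0 := (cosh_pos x).ne'
  refine ((hasDerivAt_sinh x).fun_neg.fun_div ((hasDerivAt_cosh x).fun_pow 2)
    (pow_ne_zero 2 hc)).congr_deriv ?_
  norm_num
  field_simp
  linear_combination -2 * cosh_sq_sub_sinh_sq x

lemma deriv_deriv_inv_cosh (x : ℝ) :
    deriv (deriv fun x : ℝ => 1 / cosh x) x = 1 / cosh x - 2 / cosh x ^ 3 := by
  rw [funext fun y => (hasDerivAt_inv_cosh y).deriv]
  exact (hasDerivAt_neg_sinh_div_cosh_sq x).deriv

lemma inv_cosh_eigenfunction (c x : ℝ) :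
    -deriv (deriv fun x : ℝ => 1 / cosh x) x + (c - 2 * (1 / cosh x) ^ 2) * (1 / cosh x)
      = (c - 1) * (1 / cosh x) := by
  rw [deriv_deriv_inv_cosh]
  ring

/-- For the MSTB kink `(tanh x, 0)`, the orthogonal fluctuation operator
`H₂₂ = -d²/dx² + σ² - 2 sech²x` has the discrete eigenfunction `sech x` with
eigenvalue `ω² = σ² - 1`; this eigenvalue is negative (instability) when
`0 < σ < 1` and positive when `σ > 1`. -/
theorem mstb_orthogonal_mode (σ : ℝ) (hσ : 0 < σ) :
    let η : ℝ → ℝ := fun x => 1 / Real.cosh x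
    (∀ x, -(deriv (deriv η) x) + (σ ^ 2 - 2 * (1 / Real.cosh x) ^ 2) * η x
      = (σ ^ 2 - 1) * η x) ∧
    (σ < 1 → σ ^ 2 - 1 < 0) ∧
    (1 < σ → 0 < σ ^ 2 - 1) :=
  ⟨inv_cosh_eigenfunction (σ ^ 2),
    fun h => sub_neg.2 ((sq_lt_one_iff₀ hσ.le).2 h),
    fun h => sub_pos.2 (one_lt_sq_iff₀ hσ.le |>.2 h)⟩
end

section
/- For the coupled two-component φ⁴ theory with κ > 1, the orthogonal fluctuation operator H₂₂ = −d²/dx² + 2κ tanh²x − 2 around the kink (tanh x, 0) has discrete eigenvalues ω_n² = (2n+1)ρ − n² − n − 5/2 with ρ = √(2κ + 1/4), for integers n ≥ 0 satisfying κ > n(n+1)/2; in particular ω₀² = ρ − 5/2 < 0 if and only if κ < 3, so the kink (tanh x, 0) is linearly unstable for 1 < κ < 3 and linearly stable for κ > 3. -/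
/-!
With `t = tanh x`, differentiation maps `sech^a x · r(t)` to
`sech^a x · (-a t r + (1 - t²) r')(t)`, and applying it twice gives
`(1 - t²) G_a r + a(a + 1) t² r - a r` with the Gegenbauer operator
`G_a r = (1 - t²) r'' - (2a + 2) t r'`. Hence if `G_a r = -μ r`, then `sech^a x · r(tanh x)` is
an eigenfunction of `-d²/dx² + (a(a + 1) + μ) tanh² x - 2` with eigenvalue `a + μ - 2`.
The equation `G_a r = -n(n + 2a + 1) r` has a polynomial solution of degree `n` (Frobenius
recursion), and `a = ρ - 1/2 - n` makes `a(a + 1) + n(n + 2a + 1) = (a + n)(a + n + 1) = 2κ`,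
giving the eigenvalue `(2n + 1)ρ - n² - n - 5/2`. The condition `κ > n(n+1)/2` is exactly
`a > 0`, so the eigenfunction decays like `e^{-a|x|}` and is square-integrable.
-/

open Polynomial Real MeasureTheory Set Filter

namespace DoublePhi4

-- `gegenbauerOp a r = -n(n + 2a + 1) r` is the Gegenbauer equation with parameter `a + 1/2`.
noncomputable def gegenbauerOp (a : ℝ) (r : ℝ[X]) : ℝ[X] :=
  (1 - X ^ 2) * derivative (derivative r) - C (2 * a + 2) * (X * derivative r)

noncomputable def gegenbauerCoeff (a : ℝ) (n : ℕ) : ℕ → ℝ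
  | 0 => if Even n then 1 else 0
  | 1 => if Even n then 0 else 1
  | k + 2 => (k * (k + 1 + 2 * a) - n * (n + 2 * a + 1)) / ((k + 2) * (k + 1)) *
      gegenbauerCoeff a n k

lemma gegenbauerCoeff_add_two (a : ℝ) (n k : ℕ) :
    ((k : ℝ) + 2) * ((k : ℝ) + 1) * gegenbauerCoeff a n (k + 2)
      = ((k : ℝ) * (k + 1 + 2 * a) - n * (n + 2 * a + 1)) * gegenbauerCoeff a n k := by
  rw [gegenbauerCoeff]
  field_simp

lemma gegenbauerCoeff_eq_zero_of_mod_two_ne (a : ℝ) (n : ℕ) :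
    ∀ k : ℕ, k % 2 ≠ n % 2 → gegenbauerCoeff a n k = 0
  | 0, h => by simp [gegenbauerCoeff, Nat.even_iff]; omega
  | 1, h => by simp [gegenbauerCoeff, Nat.even_iff]; omega
  | k + 2, h => by
    rw [gegenbauerCoeff, gegenbauerCoeff_eq_zero_of_mod_two_ne a n k (by omega), mul_zero]

lemma gegenbauerCoeff_eq_zero_of_lt (a : ℝ) (n : ℕ) :
    ∀ k : ℕ, n < k → gegenbauerCoeff a n k = 0
  | 0, h => by omega
  | 1, h => by
    obtain rfl : n = 0 := by omega
    simp [gegenbauerCoeff]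
  | k + 2, h => by
    rw [gegenbauerCoeff]
    rcases lt_trichotomy n k with hnk | rfl | hnk
    · rw [gegenbauerCoeff_eq_zero_of_lt a n k hnk, mul_zero]
    · rw [show ((n : ℝ) * (n + 1 + 2 * a) - n * (n + 2 * a + 1)) = 0 by ring]
      simp
    · rw [gegenbauerCoeff_eq_zero_of_mod_two_ne a n k (by omega), mul_zero]

noncomputable def gegenbauerPoly (a : ℝ) (n : ℕ) : ℝ[X] :=
  ∑ k ∈ Finset.range (n + 1), C (gegenbauerCoeff a n k) * X ^ k

lemma coeff_gegenbauerPoly (a : ℝ) (n k : ℕ) :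
    (gegenbauerPoly a n).coeff k = gegenbauerCoeff a n k := by
  simp only [gegenbauerPoly, finsetSum_coeff, coeff_C_mul_X_pow, Finset.sum_ite_eq,
    Finset.mem_range]
  split_ifs with hk
  · rfl
  · exact (gegenbauerCoeff_eq_zero_of_lt a n k (by omega)).symm

lemma gegenbauerPoly_ne_zero (a : ℝ) (n : ℕ) : gegenbauerPoly a n ≠ 0 := by
  intro h
  rcases Nat.even_or_odd n with hn | hn
  · simpa [gegenbauerCoeff, hn, h] using coeff_gegenbauerPoly a n 0
  · simpa [gegenbauerCoeff, Nat.not_even_iff_odd.mpr hn, h] using coeff_gegenbauerPoly a n 1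

lemma gegenbauerOp_gegenbauerPoly (a : ℝ) (n : ℕ) :
    gegenbauerOp a (gegenbauerPoly a n)
      = -C ((n : ℝ) * (n + 2 * a + 1)) * gegenbauerPoly a n := by
  ext k
  simp only [gegenbauerOp, coeff_sub, sub_mul, one_mul, coeff_C_mul, neg_mul, coeff_neg]
  rcases k with _ | _ | k
  · rw [coeff_X_pow_mul', if_neg (by norm_num), mul_coeff_zero, coeff_X_zero, zero_mul]
    simp only [coeff_derivative, coeff_gegenbauerPoly]
    push_cast
    linear_combination gegenbauerCoeff_add_two a n 0
  · rw [coeff_X_pow_mul', if_neg (by norm_num), coeff_X_mul]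
    simp only [coeff_derivative, coeff_gegenbauerPoly]
    push_cast
    linear_combination gegenbauerCoeff_add_two a n 1
  · rw [coeff_X_mul, coeff_X_pow_mul]
    simp only [coeff_derivative, coeff_gegenbauerPoly]
    push_cast
    linear_combination (norm := (push_cast; ring1)) gegenbauerCoeff_add_two a n (k + 2)

noncomputable def tanhDeriv (a : ℝ) (r : ℝ[X]) : ℝ[X] :=
  C (-a) * (X * r) + (1 - X ^ 2) * derivative r

lemma tanhDeriv_tanhDeriv (a : ℝ) (r : ℝ[X]) :
    tanhDeriv a (tanhDeriv a r)
      = (1 - X ^ 2) * gegenbauerOp a r + C (a * (a + 1)) * X ^ 2 * r - C a * r := by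
  simp only [tanhDeriv, gegenbauerOp, derivative_mul, derivative_C, derivative_X,
    derivative_sub, derivative_one, derivative_X_pow, map_mul, map_add, map_neg, Nat.cast_ofNat,
    map_ofNat, map_one]
  ring

lemma hasDerivAt_tanh (x : ℝ) : HasDerivAt tanh (1 - tanh x ^ 2) x := by
  have h := (hasDerivAt_sinh x).div (hasDerivAt_cosh x) (cosh_pos x).ne'
  rw [show sinh / cosh = tanh from funext fun y => (tanh_eq_sinh_div_cosh y).symm] at h
  refine h.congr_deriv ?_
  rw [tanh_eq_sinh_div_cosh]
  field_simp

lemma continuous_tanh : Continuous tanh :=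
  continuous_iff_continuousAt.mpr fun x => (hasDerivAt_tanh x).continuousAt

noncomputable def sechPowPoly (a : ℝ) (r : ℝ[X]) (x : ℝ) : ℝ :=
  cosh x ^ (-a) * r.eval (tanh x)

lemma hasDerivAt_sechPowPoly (a : ℝ) (r : ℝ[X]) (x : ℝ) :
    HasDerivAt (sechPowPoly a r) (sechPowPoly a (tanhDeriv a r) x) x := by
  have hpow : HasDerivAt (fun y => cosh y ^ (-a)) (cosh x ^ (-a) * (-a * tanh x)) x := by
    convert (hasDerivAt_cosh x).rpow_const (p := -a) (Or.inl (cosh_pos x).ne') using 1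
    rw [rpow_sub (cosh_pos x), rpow_one, tanh_eq_sinh_div_cosh]
    ring
  refine (hpow.mul ((r.hasDerivAt (tanh x)).comp x (hasDerivAt_tanh x))).congr_deriv ?_
  simp only [sechPowPoly, tanhDeriv, Function.comp_apply, eval_add, eval_mul, eval_C, eval_X,
    eval_sub, eval_one, eval_pow]
  ring

lemma deriv_sechPowPoly (a : ℝ) (r : ℝ[X]) :
    deriv (sechPowPoly a r) = sechPowPoly a (tanhDeriv a r) :=
  funext fun x => (hasDerivAt_sechPowPoly a r x).deriv

lemma sechPowPoly_eigen {a μ : ℝ} {r : ℝ[X]} (hr : gegenbauerOp a r = -C μ * r) (x : ℝ) :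
    -deriv (deriv (sechPowPoly a r)) x
        + ((a * (a + 1) + μ) * tanh x ^ 2 - 2) * sechPowPoly a r x
      = (a + μ - 2) * sechPowPoly a r x := by
  rw [deriv_sechPowPoly, deriv_sechPowPoly]
  simp only [sechPowPoly, tanhDeriv_tanhDeriv, hr, eval_add, eval_sub, eval_mul, eval_neg,
    eval_C, eval_X, eval_pow, eval_one]
  ring

lemma exists_sechPowPoly_ne_zero (a : ℝ) {r : ℝ[X]} (hr : r ≠ 0) :
    ∃ x, sechPowPoly a r x ≠ 0 := by
  by_contra! h
  have hroots : range tanh ⊆ {t | r.IsRoot t} := by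
    rintro _ ⟨x, rfl⟩
    simpa [sechPowPoly, (rpow_pos_of_pos (cosh_pos x) _).ne'] using h x
  exact hr (r.eq_zero_of_infinite_isRoot
    ((infinite_range_of_injective tanh_injective).mono hroots))

lemma cosh_rpow_neg_le {b : ℝ} (hb : 0 ≤ b) (x : ℝ) :
    cosh x ^ (-b) ≤ 2 ^ b * exp (-b * x) := by
  have hcosh : exp x / 2 ≤ cosh x := by
    rw [cosh_eq]; linarith [exp_pos (-x)]
  calc cosh x ^ (-b) ≤ (exp x / 2) ^ (-b) :=
        rpow_le_rpow_of_nonpos (by positivity) hcosh (by linarith)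
    _ = 2 ^ b * exp (-b * x) := by
        rw [div_rpow (exp_pos x).le zero_le_two, rpow_neg zero_le_two, ← exp_mul]
        field_simp

lemma integrable_cosh_rpow_neg {b : ℝ} (hb : 0 < b) :
    Integrable (fun x => cosh x ^ (-b)) := by
  have hcont : Continuous fun x => cosh x ^ (-b) :=
    continuous_cosh.rpow_const fun x => Or.inl (cosh_pos x).ne'
  refine hcont.locallyIntegrable.integrable_of_isBigO_atTop_of_norm_isNegInvariant
    (g := fun x => exp (-b * x)) (Eventually.of_forall fun x => by simp [cosh_neg])
    (Asymptotics.IsBigO.of_bound (2 ^ b) (Eventually.of_forall fun x => ?_))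
    ⟨Ioi 0, Ioi_mem_atTop 0, exp_neg_integrableOn_Ioi 0 hb⟩
  rw [norm_of_nonneg (by positivity), norm_of_nonneg (exp_pos _).le]
  exact cosh_rpow_neg_le hb.le x

lemma integrable_sechPowPoly_sq {a : ℝ} (ha : 0 < a) (r : ℝ[X]) :
    Integrable (fun x => sechPowPoly a r x ^ 2) := by
  obtain ⟨M, hM⟩ := isCompact_Icc.exists_bound_of_continuousOn
    (r.continuous.pow 2).continuousOn (s := Icc (-1 : ℝ) 1)
  have hbound : ∀ x, ‖r.eval (tanh x) ^ 2‖ ≤ M := fun x =>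
    hM _ ⟨(neg_one_lt_tanh x).le, (tanh_lt_one x).le⟩
  have hsq : (fun x => sechPowPoly a r x ^ 2)
      = fun x => cosh x ^ (-(2 * a)) * r.eval (tanh x) ^ 2 := by
    ext x
    rw [sechPowPoly, mul_pow, ← rpow_mul_natCast (cosh_pos x).le]
    ring_nf
  rw [hsq]
  exact (integrable_cosh_rpow_neg (by positivity)).mul_bdd
    ((r.continuous.pow 2).comp continuous_tanh).aestronglyMeasurable
    (Eventually.of_forall hbound)

end DoublePhi4

open DoublePhi4 in
theorem double_phi4_orthogonal_spectrum_general (κ : ℝ) :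
    let ρ : ℝ := Real.sqrt (2 * κ + 1 / 4)
    (∀ n : ℕ, (n : ℝ) * ((n : ℝ) + 1) / 2 < κ →
      ∃ η : ℝ → ℝ, (∃ x, η x ≠ 0) ∧
        MeasureTheory.Integrable (fun x => (η x) ^ 2) ∧
        ∀ x, -(deriv (deriv η) x) + (2 * κ * (Real.tanh x) ^ 2 - 2) * η x
          = ((2 * (n : ℝ) + 1) * ρ - (n : ℝ) ^ 2 - (n : ℝ) - 5 / 2) * η x) ∧
    (ρ - 5 / 2 < 0 ↔ κ < 3) := by
  intro ρ
  refine ⟨fun n hn => ?_, ?_⟩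
  · have hκ : 0 ≤ 2 * κ + 1 / 4 := by linarith [show (0 : ℝ) ≤ n * (n + 1) by positivity]
    have hρ : ρ ^ 2 = 2 * κ + 1 / 4 := sq_sqrt hκ
    have hnρ : (n : ℝ) + 1 / 2 < ρ := (lt_sqrt (by positivity)).mpr (by nlinarith)
    set a := ρ - 1 / 2 - n
    have ha : 0 < a := sub_pos.mpr (by linarith)
    refine ⟨sechPowPoly a (gegenbauerPoly a n),
      exists_sechPowPoly_ne_zero a (gegenbauerPoly_ne_zero a n),
      integrable_sechPowPoly_sq ha _, fun x => ?_⟩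
    have h := sechPowPoly_eigen (gegenbauerOp_gegenbauerPoly a n) x
    rwa [show a * (a + 1) + n * (n + 2 * a + 1) = 2 * κ by linear_combination hρ,
      show a + n * (n + 2 * a + 1) - 2 = (2 * n + 1) * ρ - n ^ 2 - n - 5 / 2 by ring] at h
  · rw [sub_neg, sqrt_lt' (by norm_num)]
    constructor <;> intro h <;> linarith

/-- For the double `φ⁴` theory with `κ > 1`, the orthogonal fluctuation operator
`H₂₂ = -d²/dx² + 2κ tanh²x - 2` around the kink `(tanh x, 0)` has, for each
`n ≥ 0` with `κ > n(n+1)/2`, a discrete (square-integrable, nontrivial)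
eigenfunction with eigenvalue `ω_n² = (2n+1)ρ - n² - n - 5/2`, where
`ρ = √(2κ + 1/4)`; moreover `ω₀² = ρ - 5/2 < 0` iff `κ < 3` (instability for
`1 < κ < 3`, stability for `κ > 3`). -/
theorem double_phi4_orthogonal_spectrum (κ : ℝ) (hκ : 1 < κ) :
    let ρ : ℝ := Real.sqrt (2 * κ + 1 / 4)
    (∀ n : ℕ, (n : ℝ) * ((n : ℝ) + 1) / 2 < κ →
      ∃ η : ℝ → ℝ, (∃ x, η x ≠ 0) ∧
        MeasureTheory.Integrable (fun x => (η x) ^ 2) ∧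
        ∀ x, -(deriv (deriv η) x) + (2 * κ * (Real.tanh x) ^ 2 - 2) * η x
          = ((2 * (n : ℝ) + 1) * ρ - (n : ℝ) ^ 2 - (n : ℝ) - 5 / 2) * η x) ∧
    (ρ - 5 / 2 < 0 ↔ κ < 3) :=
  double_phi4_orthogonal_spectrum_general κ
end
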